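/- Let T be a symmetric bilinear form on Minkowski space V = ℝ^(1+d) such that T(k,k) > 0 for every non-vanishing null vector k and T(k,k) ≥ 0 for all vectors k. Then any timelike eigenvector k* (i.e., satisfying T(k*,·) = -λ g(k*,·) for some λ ∈ ℝ) is unique up to scalar multiplication. -/

import Mathlib

noncomputable section

/-- The Minkowski bilinear form on `ℝ^(1+d)`, written as `ℝ × (Fin d → ℝ)`. -/
def mink (d : ℕ) (x y : ℝ × (Fin d → ℝ)) : ℝ :=
  -(x.1 * y.1) + ∑ i, x.2 i * y.2 i

/-!
Symmetry of `T` forces two eigenvalues with `g(k₁, k₂) ≠ 0` to agree, and two timelike vectors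
are never orthogonal. So `T = -λ g` on the plane spanned by `k₁` and `k₂`. If that plane were
two-dimensional it would contain a nonzero null vector `n` (the quadratic `t ↦ g(k₂ + t k₁)`
is negative at `0` and nonnegative where the time component vanishes), and then
`T(n, n) = -λ g(n, n) = 0` would contradict positivity of `T` on null vectors.
-/

section Minkowski

variable {d : ℕ}

theorem mink_comm (x y : ℝ × (Fin d → ℝ)) : mink d x y = mink d y x := by
  simp only [mink, mul_comm]

theorem mink_add_smul_left (x y v : ℝ × (Fin d → ℝ)) (t : ℝ) :
    mink d (x + t • y) v = mink d x v + t * mink d y v := by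
  simp only [mink, Prod.fst_add, Prod.snd_add, Prod.smul_fst, Prod.smul_snd, Pi.add_apply,
    Pi.smul_apply, smul_eq_mul, add_mul, Finset.sum_add_distrib, mul_assoc, ← Finset.mul_sum]
  ring

theorem mink_add_smul_self (x y : ℝ × (Fin d → ℝ)) (t : ℝ) :
    mink d (x + t • y) (x + t • y) = mink d x x + 2 * t * mink d x y + t ^ 2 * mink d y y := by
  rw [mink_add_smul_left, mink_comm x, mink_comm y, mink_add_smul_left, mink_add_smul_left,
    mink_comm y x]
  ring

theorem mink_self_nonneg_of_fst_eq_zero {x : ℝ × (Fin d → ℝ)} (hx : x.1 = 0) :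
    0 ≤ mink d x x := by
  simp only [mink, hx, mul_zero, neg_zero, zero_add]
  exact Finset.sum_nonneg fun i _ => mul_self_nonneg _

theorem fst_ne_zero_of_mink_self_neg {x : ℝ × (Fin d → ℝ)} (hx : mink d x x < 0) : x.1 ≠ 0 :=
  fun h => (mink_self_nonneg_of_fst_eq_zero h).not_gt hx

theorem exists_mink_add_smul_self_nonneg {k : ℝ × (Fin d → ℝ)} (hk : k.1 ≠ 0)
    (w : ℝ × (Fin d → ℝ)) : ∃ t : ℝ, 0 ≤ mink d (w + t • k) (w + t • k) := by
  refine ⟨-(w.1 / k.1), mink_self_nonneg_of_fst_eq_zero ?_⟩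
  simp only [Prod.fst_add, Prod.smul_fst, smul_eq_mul]
  field_simp
  ring

theorem mink_ne_zero_of_timelike {x y : ℝ × (Fin d → ℝ)} (hx : mink d x x < 0)
    (hy : mink d y y < 0) : mink d y x ≠ 0 := by
  intro hxy
  obtain ⟨t, ht⟩ := exists_mink_add_smul_self_nonneg (fst_ne_zero_of_mink_self_neg hx) y
  rw [mink_add_smul_self, hxy] at ht
  nlinarith [sq_nonneg t]

theorem exists_mink_add_smul_self_eq_zero {k w : ℝ × (Fin d → ℝ)} (hk : k.1 ≠ 0)
    (hw : mink d w w ≤ 0) : ∃ t : ℝ, mink d (w + t • k) (w + t • k) = 0 := by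
  obtain ⟨s, hs⟩ := exists_mink_add_smul_self_nonneg hk w
  have hcont : ContinuousOn (fun t : ℝ => mink d (w + t • k) (w + t • k)) (Set.uIcc 0 s) := by
    simp only [mink_add_smul_self]
    fun_prop
  obtain ⟨t, -, ht⟩ := intermediate_value_uIcc hcont
    (Set.mem_uIcc.2 (Or.inl ⟨by simpa using hw, hs⟩))
  exact ⟨t, ht⟩

theorem apply_add_smul_of_eigen {T : (ℝ × (Fin d → ℝ)) →ₗ[ℝ] (ℝ × (Fin d → ℝ)) →ₗ[ℝ] ℝ}
    {x y : ℝ × (Fin d → ℝ)} {lam : ℝ} (hx : ∀ v, T x v = -(lam * mink d x v))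
    (hy : ∀ v, T y v = -(lam * mink d y v)) (t : ℝ) (v : ℝ × (Fin d → ℝ)) :
    T (x + t • y) v = -(lam * mink d (x + t • y) v) := by
  rw [map_add, map_smul, LinearMap.add_apply, LinearMap.smul_apply, hx, hy, mink_add_smul_left,
    smul_eq_mul]
  ring

end Minkowski

theorem timelike_eigenvector_unique_general (d : ℕ)
    (T : (ℝ × (Fin d → ℝ)) →ₗ[ℝ] (ℝ × (Fin d → ℝ)) →ₗ[ℝ] ℝ)
    (hsymm : ∀ u v, T u v = T v u)
    (hnull : ∀ k, k ≠ 0 → mink d k k = 0 → 0 < T k k)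
    (k₁ k₂ : ℝ × (Fin d → ℝ)) (lam₁ lam₂ : ℝ)
    (ht₁ : mink d k₁ k₁ < 0) (ht₂ : mink d k₂ k₂ < 0)
    (he₁ : ∀ v, T k₁ v = -(lam₁ * mink d k₁ v))
    (he₂ : ∀ v, T k₂ v = -(lam₂ * mink d k₂ v)) :
    ∃ c : ℝ, k₂ = c • k₁ := by
  have hlam : lam₂ = lam₁ := by
    have h := hsymm k₁ k₂
    rw [he₁, he₂, mink_comm k₁] at h
    exact mul_right_cancel₀ (mink_ne_zero_of_timelike ht₁ ht₂) (neg_injective h).symm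
  subst hlam
  obtain ⟨t, hn⟩ := exists_mink_add_smul_self_eq_zero (fst_ne_zero_of_mink_self_neg ht₁) ht₂.le
  refine ⟨-t, ?_⟩
  by_contra hne
  have hn0 : k₂ + t • k₁ ≠ 0 := fun h => hne (by rw [neg_smul, ← sub_eq_zero, sub_neg_eq_add, h])
  have hT := apply_add_smul_of_eigen he₂ he₁ t (k₂ + t • k₁)
  rw [hn, mul_zero, neg_zero] at hT
  exact (hnull _ hn0 hn).ne' hT

/-- If a symmetric bilinear form `T` on Minkowski space satisfies `T(k,k) > 0` for every
non-vanishing null vector `k` and `T(k,k) ≥ 0` for all `k`, then any timelike eigenvector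
(`T(k,·) = -λ g(k,·)`) is unique up to scalar multiplication. -/
theorem timelike_eigenvector_unique (d : ℕ)
    (T : (ℝ × (Fin d → ℝ)) →ₗ[ℝ] (ℝ × (Fin d → ℝ)) →ₗ[ℝ] ℝ)
    (hsymm : ∀ u v, T u v = T v u)
    (hnull : ∀ k, k ≠ 0 → mink d k k = 0 → 0 < T k k)
    (hpos : ∀ k, 0 ≤ T k k)
    (k₁ k₂ : ℝ × (Fin d → ℝ)) (lam₁ lam₂ : ℝ)
    (ht₁ : mink d k₁ k₁ < 0) (ht₂ : mink d k₂ k₂ < 0)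
    (he₁ : ∀ v, T k₁ v = -(lam₁ * mink d k₁ v))
    (he₂ : ∀ v, T k₂ v = -(lam₂ * mink d k₂ v)) :
    ∃ c : ℝ, k₂ = c • k₁ :=
  timelike_eigenvector_unique_general d T hsymm hnull k₁ k₂ lam₁ lam₂ ht₁ ht₂ he₁ he₂
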